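/- (Minimum dwell-time, (b)⇒(a)) Suppose A(τ) is Metzler for all τ ∈ [0,T̄], J is entrywise nonnegative, and there exist a differentiable ζ : [0,T̄] → ℝⁿ with ζ(T̄) > 0 and ε > 0 such that: ζ(T̄)ᵀA(T̄) + ε𝟙ᵀ ≤ 0, ζ'(τ)ᵀ + ζ(τ)ᵀA(τ) ≤ 0 for all τ ∈ [0,T̄], and ζ(0)ᵀJ − ζ(T̄)ᵀ + ε𝟙ᵀ ≤ 0. Then with λ := ζ(T̄) > 0 and Φ(T̄) := Ψ(T̄,0), one has λᵀA(T̄) < 0 and λᵀ(Φ(T̄)J − I) < 0 componentwise. -/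

import Mathlib

/-!
The nonnegative orthant is forward invariant for `x' = A(t) x` when `A` is Metzler: perturbing a
solution by `δ e^{(C+1)t} 𝟙`, where `C` bounds the row sums of `A`, makes the velocity of any
coordinate that reaches zero strictly positive, so the perturbed solution never leaves the open
orthant; letting `δ → 0` shows `Ψ(t,0) ≥ 0`. Consequently `t ↦ ζ(t)ᵀΨ(t,0)`, whose derivative is
`(ζ'(t)ᵀ + ζ(t)ᵀA(t))Ψ(t,0) ≤ 0`, is antitone, so `ζ(T̄)ᵀΨ(T̄,0) ≤ ζ(0)ᵀ`; multiplying by `J ≥ 0`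
and using the jump condition gives `λᵀ(Ψ(T̄,0)J - I) ≤ -ε𝟙ᵀ`.
-/

open Matrix Set Filter Topology

theorem HasDerivWithinAt.nonpos_of_isMinOn_Icc {f : ℝ → ℝ} {f' a b : ℝ} (hab : a < b)
    (hf : HasDerivWithinAt f f' (Icc a b) b) (hmin : IsMinOn f (Icc a b) b) : f' ≤ 0 := by
  have hcone : a - b ∈ posTangentConeAt (Icc a b) b :=
    mem_posTangentConeAt_of_segment_subset (by
      rw [add_sub_cancel, segment_symm, segment_eq_Icc hab.le])
  have := (hmin.localize (f := f)).hasFDerivWithinAt_nonneg hf.hasFDerivWithinAt hcone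
  rw [ContinuousLinearMap.toSpanSingleton_apply, smul_eq_mul] at this
  exact nonpos_of_mul_nonneg_right this (sub_neg.2 hab)

theorem forall_pos_of_deriv_pos_of_eq_zero {ι : Type*} [Finite ι] {a b : ℝ} {y y' : ℝ → ι → ℝ}
    (hy : ∀ t ∈ Icc a b, ∀ i, HasDerivWithinAt (fun s => y s i) (y' t i) (Icc a b) t)
    (ha : ∀ i, 0 < y a i)
    (hboundary : ∀ t ∈ Ioc a b, ∀ i, 0 ≤ y t → y t i = 0 → 0 < y' t i) :
    ∀ t ∈ Icc a b, ∀ i, 0 < y t i := by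
  have hcont : ∀ i, ContinuousOn (fun s => y s i) (Icc a b) := fun i t ht =>
    (hy t ht i).continuousWithinAt
  by_contra! ⟨t₁, ht₁, i₁, hi₁⟩
  set S := ⋃ i, Icc a b ∩ (fun s => y s i) ⁻¹' Iic 0
  have hS : IsClosed S := isClosed_iUnion_of_finite fun i =>
    (hcont i).preimage_isClosed_of_isClosed isClosed_Icc isClosed_Iic
  have hSbdd : BddBelow S := ⟨a, by simp +contextual [S, lowerBounds]⟩
  obtain ⟨i, ⟨ha₀, hb₀⟩, hi⟩ :=
    mem_iUnion.1 (hS.csInf_mem ⟨t₁, mem_iUnion.2 ⟨i₁, ht₁, hi₁⟩⟩ hSbdd)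
  set t₀ := sInf S
  have hbefore : ∀ t ∈ Ico a t₀, ∀ j, 0 < y t j := fun t ht j => by
    by_contra! hj
    exact (csInf_le hSbdd (mem_iUnion.2 ⟨j, ⟨ht.1, ht.2.le.trans hb₀⟩, hj⟩)).not_gt ht.2
  have hat : a < t₀ := ha₀.lt_of_ne fun h => (hi.trans_lt (h ▸ ha i)).false
  have hsub : Icc a t₀ ⊆ Icc a b := Icc_subset_Icc_right hb₀
  have hnonneg : ∀ t ∈ Icc a t₀, ∀ j, 0 ≤ y t j := fun t ht j => by
    have hclosed := ((hcont j).mono hsub).preimage_isClosed_of_isClosed isClosed_Icc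
      (isClosed_Ici (a := 0))
    rw [← closure_Ico hat.ne] at ht
    refine (closure_minimal (fun s hs => ?_) hclosed ht).2
    exact ⟨Ico_subset_Icc_self hs, (hbefore s hs j).le⟩
  have hzero : y t₀ i = 0 := le_antisymm hi (hnonneg t₀ ⟨hat.le, le_rfl⟩ i)
  have hmin : IsMinOn (fun s => y s i) (Icc a t₀) t₀ := fun t ht => by
    simpa [hzero] using hnonneg t ht i
  exact ((hy t₀ ⟨ha₀, hb₀⟩ i).mono hsub |>.nonpos_of_isMinOn_Icc hat hmin).not_gt
    (hboundary t₀ ⟨hat, hb₀⟩ i (hnonneg t₀ ⟨hat.le, le_rfl⟩) hzero)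

section

variable {ι κ : Type*} [Fintype ι]

theorem Matrix.mulVec_apply_nonneg_of_offDiag_nonneg {M : Matrix ι ι ℝ} {v : ι → ℝ} {i : ι}
    (hM : ∀ j, i ≠ j → 0 ≤ M i j) (hv : 0 ≤ v) (hvi : v i = 0) : 0 ≤ (M *ᵥ v) i := by
  refine Finset.sum_nonneg fun j _ => ?_
  obtain rfl | hij := eq_or_ne i j
  · simp [hvi]
  · exact mul_nonneg (hM j hij) (hv j)

theorem Matrix.vecMul_le_vecMul_of_nonneg {M : Matrix ι κ ℝ} (hM : ∀ i j, 0 ≤ M i j)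
    {v w : ι → ℝ} (h : v ≤ w) : v ᵥ* M ≤ w ᵥ* M := fun j =>
  dotProduct_le_dotProduct_of_nonneg_right h fun i => hM i j

theorem exists_forall_sum_le_of_continuousOn {A : ℝ → Matrix ι ι ℝ} {s : Set ℝ}
    (hs : IsCompact s) (hA : ∀ i j, ContinuousOn (fun t => A t i j) s) :
    ∃ C, ∀ t ∈ s, ∀ i, ∑ j, A t i j ≤ C := by
  choose C hC using fun i =>
    hs.bddAbove_image (continuousOn_finsetSum Finset.univ fun j _ => hA i j)
  obtain ⟨M, hM⟩ := Finite.exists_le C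
  exact ⟨M, fun t ht i => (hC i ⟨t, ht, rfl⟩).trans (hM i)⟩

theorem nonneg_of_hasDerivWithinAt_mulVec {a b C : ℝ} {A : ℝ → Matrix ι ι ℝ} {x : ℝ → ι → ℝ}
    (hC : ∀ t ∈ Icc a b, ∀ i, ∑ j, A t i j ≤ C)
    (hM : ∀ t ∈ Icc a b, ∀ i j, i ≠ j → 0 ≤ A t i j)
    (hx : ∀ t ∈ Icc a b, ∀ i, HasDerivWithinAt (fun s => x s i) ((A t *ᵥ x t) i) (Icc a b) t)
    (ha : 0 ≤ x a) : ∀ t ∈ Icc a b, 0 ≤ x t := by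
  have hpert : ∀ δ > 0, ∀ t ∈ Icc a b, ∀ i, 0 < x t i + δ * Real.exp ((C + 1) * (t - a)) := by
    intro δ hδ
    set e : ℝ → ℝ := fun t => δ * Real.exp ((C + 1) * (t - a))
    have he : ∀ t, HasDerivAt e (e t * (C + 1)) t := fun t => by
      simpa [e, mul_assoc] using
        (((hasDerivAt_id t).sub_const a).const_mul (C + 1)).exp.const_mul δ
    refine forall_pos_of_deriv_pos_of_eq_zero (y := fun t i => x t i + e t)
      (fun t ht i => (hx t ht i).add (he t).hasDerivWithinAt) (fun i => ?_) ?_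
    · simpa [e] using add_pos_of_nonneg_of_pos (ha i) hδ
    · intro t ht i hy hyi
      have hrow : (A t *ᵥ fun j => x t j + e t) i = (A t *ᵥ x t) i + (∑ j, A t i j) * e t := by
        simp only [mulVec, dotProduct, mul_add, Finset.sum_add_distrib, Finset.sum_mul]
      have hAy := mulVec_apply_nonneg_of_offDiag_nonneg (hM t (Ioc_subset_Icc_self ht) i) hy hyi
      have hrowsum := hC t (Ioc_subset_Icc_self ht) i
      have hepos : 0 < e t := by positivity
      nlinarith
  intro t ht i
  have hlim : Tendsto (fun δ => x t i + δ * Real.exp ((C + 1) * (t - a))) (𝓝[>] 0) (𝓝 (x t i)) :=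
    ((continuous_const.add (continuous_id.mul continuous_const)).tendsto' 0 _ (by simp)).mono_left
      nhdsWithin_le_nhds
  exact ge_of_tendsto hlim (eventually_nhdsWithin_of_forall fun δ hδ => (hpert δ hδ t ht i).le)

theorem nonneg_of_hasDerivWithinAt_mul {a b C : ℝ} {A : ℝ → Matrix ι ι ℝ} {X : ℝ → Matrix ι κ ℝ}
    (hC : ∀ t ∈ Icc a b, ∀ i, ∑ j, A t i j ≤ C)
    (hM : ∀ t ∈ Icc a b, ∀ i j, i ≠ j → 0 ≤ A t i j)
    (hX : ∀ t ∈ Icc a b, ∀ i k, HasDerivWithinAt (fun s => X s i k) ((A t * X t) i k) (Icc a b) t)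
    (ha : ∀ i k, 0 ≤ X a i k) : ∀ t ∈ Icc a b, ∀ i k, 0 ≤ X t i k := fun t ht i k =>
  nonneg_of_hasDerivWithinAt_mulVec (x := fun s i => X s i k) hC hM (fun s hs i => hX s hs i k)
    (fun i => ha i k) t ht i

theorem antitoneOn_vecMul_of_hasDerivWithinAt {a b : ℝ} {A : ℝ → Matrix ι ι ℝ}
    {v v' : ℝ → ι → ℝ} {X : ℝ → Matrix ι κ ℝ}
    (hv : ∀ t ∈ Icc a b, ∀ i, HasDerivWithinAt (fun s => v s i) (v' t i) (Icc a b) t)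
    (hX : ∀ t ∈ Icc a b, ∀ i k, HasDerivWithinAt (fun s => X s i k) ((A t * X t) i k) (Icc a b) t)
    (hXnonneg : ∀ t ∈ Icc a b, ∀ i k, 0 ≤ X t i k)
    (hdecay : ∀ t ∈ Icc a b, v' t + v t ᵥ* A t ≤ 0) :
    AntitoneOn (fun t => v t ᵥ* X t) (Icc a b) := by
  intro s hs t ht hst k
  have hderiv : ∀ t ∈ Icc a b, HasDerivWithinAt (fun s => (v s ᵥ* X s) k)
      ((v' t ᵥ* X t + v t ᵥ* (A t * X t)) k) (Icc a b) t := fun t ht => by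
    have : HasDerivWithinAt (fun s => ∑ i, v s i * X s i k)
        (∑ i, (v' t i * X t i k + v t i * (A t * X t) i k)) (Icc a b) t :=
      HasDerivWithinAt.fun_sum fun i _ => (hv t ht i).mul (hX t ht i k)
    simpa only [vecMul, dotProduct, Pi.add_apply, Finset.sum_add_distrib] using this
  refine antitoneOn_of_hasDerivWithinAt_nonpos (convex_Icc a b)
    (fun t ht => (hderiv t ht).continuousWithinAt)
    (fun t ht => (hderiv t (interior_subset ht)).mono interior_subset) (fun t ht => ?_) hs ht hst
  rw [← vecMul_vecMul, ← add_vecMul]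
  simpa using vecMul_le_vecMul_of_nonneg (hXnonneg t (interior_subset ht))
    (hdecay t (interior_subset ht)) k

end

theorem stmt10_general {n : ℕ} (Tbar : ℝ) (hT : 0 < Tbar)
    (A : ℝ → Matrix (Fin n) (Fin n) ℝ)
    (hAcont : ∀ i j, Continuous fun τ => A τ i j)
    (hMetzler : ∀ τ ∈ Set.Icc (0 : ℝ) Tbar, ∀ i j, i ≠ j → 0 ≤ A τ i j)
    (J : Matrix (Fin n) (Fin n) ℝ) (hJ : ∀ i j, 0 ≤ J i j)
    (Ψ : ℝ → ℝ → Matrix (Fin n) (Fin n) ℝ)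
    (hode : ∀ s τ i j, HasDerivAt (fun t => Ψ t s i j) ((A τ * Ψ τ s) i j) τ)
    (hinit : ∀ s, Ψ s s = 1)
    (ζ ζ' : ℝ → Fin n → ℝ)
    (hζ : ∀ τ ∈ Set.Icc (0 : ℝ) Tbar, ∀ j, HasDerivAt (fun t => ζ t j) (ζ' τ j) τ)
    (ε : ℝ) (hε : 0 < ε)
    (h1 : ∀ j, Matrix.vecMul (ζ Tbar) (A Tbar) j + ε ≤ 0)
    (h2 : ∀ τ ∈ Set.Icc (0 : ℝ) Tbar, ∀ j, ζ' τ j + Matrix.vecMul (ζ τ) (A τ) j ≤ 0)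
    (h3 : ∀ j, Matrix.vecMul (ζ 0) J j - ζ Tbar j + ε ≤ 0) :
    (∀ j, Matrix.vecMul (ζ Tbar) (A Tbar) j < 0) ∧
    (∀ j, Matrix.vecMul (ζ Tbar) (Ψ Tbar 0 * J - 1) j < 0) := by
  obtain ⟨C, hC⟩ := exists_forall_sum_le_of_continuousOn (isCompact_Icc (a := 0) (b := Tbar))
    fun i j => (hAcont i j).continuousOn
  have hΨ : ∀ t ∈ Icc 0 Tbar, ∀ i j, 0 ≤ Ψ t 0 i j :=
    nonneg_of_hasDerivWithinAt_mul hC hMetzler (fun t _ i j => (hode 0 t i j).hasDerivWithinAt)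
      fun i j => by rw [hinit, one_apply]; split_ifs <;> norm_num
  have hζΨ : ζ Tbar ᵥ* Ψ Tbar 0 ≤ ζ 0 := by
    simpa [hinit] using antitoneOn_vecMul_of_hasDerivWithinAt
      (fun t ht i => (hζ t ht i).hasDerivWithinAt) (fun t _ i k => (hode 0 t i k).hasDerivWithinAt)
      hΨ h2
      (left_mem_Icc.2 hT.le) (right_mem_Icc.2 hT.le) hT.le
  refine ⟨fun j => by linarith [h1 j], fun j => ?_⟩
  calc (ζ Tbar ᵥ* (Ψ Tbar 0 * J - 1)) j = (ζ Tbar ᵥ* Ψ Tbar 0 ᵥ* J) j - ζ Tbar j := by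
        rw [vecMul_sub, vecMul_one, vecMul_vecMul]; rfl
    _ ≤ (ζ 0 ᵥ* J) j - ζ Tbar j := by gcongr; exact vecMul_le_vecMul_of_nonneg hJ hζΨ j
    _ < 0 := by linarith [h3 j]

/-- Minimum dwell-time, (b)⇒(a): If A is Metzler on [0,T̄], J ≥ 0, and
there exist differentiable ζ with ζ(T̄) > 0 and ε > 0 such that ζ(T̄)ᵀA(T̄) + ε𝟙ᵀ ≤ 0,
ζ'(τ)ᵀ + ζ(τ)ᵀA(τ) ≤ 0 on [0,T̄], and ζ(0)ᵀJ − ζ(T̄)ᵀ + ε𝟙ᵀ ≤ 0, then with λ := ζ(T̄)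
and Φ(T̄) := Ψ(T̄,0) one has λᵀA(T̄) < 0 and λᵀ(Φ(T̄)J − I) < 0 componentwise. -/
theorem stmt10 {n : ℕ} (Tbar : ℝ) (hT : 0 < Tbar)
    (A : ℝ → Matrix (Fin n) (Fin n) ℝ)
    (hAcont : ∀ i j, Continuous fun τ => A τ i j)
    (hMetzler : ∀ τ ∈ Set.Icc (0 : ℝ) Tbar, ∀ i j, i ≠ j → 0 ≤ A τ i j)
    (J : Matrix (Fin n) (Fin n) ℝ) (hJ : ∀ i j, 0 ≤ J i j)
    (Ψ : ℝ → ℝ → Matrix (Fin n) (Fin n) ℝ)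
    (hode : ∀ s τ i j, HasDerivAt (fun t => Ψ t s i j) ((A τ * Ψ τ s) i j) τ)
    (hinit : ∀ s, Ψ s s = 1)
    (ζ ζ' : ℝ → Fin n → ℝ)
    (hζ : ∀ τ ∈ Set.Icc (0 : ℝ) Tbar, ∀ j, HasDerivAt (fun t => ζ t j) (ζ' τ j) τ)
    (hζT : ∀ j, 0 < ζ Tbar j)
    (ε : ℝ) (hε : 0 < ε)
    (h1 : ∀ j, Matrix.vecMul (ζ Tbar) (A Tbar) j + ε ≤ 0)
    (h2 : ∀ τ ∈ Set.Icc (0 : ℝ) Tbar, ∀ j, ζ' τ j + Matrix.vecMul (ζ τ) (A τ) j ≤ 0)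
    (h3 : ∀ j, Matrix.vecMul (ζ 0) J j - ζ Tbar j + ε ≤ 0) :
    (∀ j, Matrix.vecMul (ζ Tbar) (A Tbar) j < 0) ∧
    (∀ j, Matrix.vecMul (ζ Tbar) (Ψ Tbar 0 * J - 1) j < 0) :=
  stmt10_general Tbar hT A hAcont hMetzler J hJ Ψ hode hinit ζ ζ' hζ ε hε h1 h2 h3
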